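/- Let D_{2,2} be the double star on 6 vertices in which the two adjacent centers each have two pendant leaves (so both centers have degree 3). Then for every n ≥ 6, ex_c(n, D_{2,2}) = 2n − 4. -/

import Mathlib

open SimpleGraph

/-- `G` contains a copy of `F`, i.e. a subgraph isomorphic to `F`
(given by an injective graph homomorphism). -/
def ContainsCopy {α β : Type*} (F : SimpleGraph α) (G : SimpleGraph β) : Prop :=
  ∃ f : α ↪ β, ∀ ⦃a b : α⦄, F.Adj a b → G.Adj (f a) (f b)

/-- The connected Turán number `ex_c(n, F)`: the maximum number of edges of a
connected `F`-free simple graph on `n` vertices. -/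
noncomputable def exConn {α : Type*} (n : ℕ) (F : SimpleGraph α) : ℕ :=
  sSup {m | ∃ G : SimpleGraph (Fin n), G.Connected ∧ ¬ ContainsCopy F G ∧ m = G.edgeSet.ncard}

/-- The double star `D_{2,2}` on 6 vertices: adjacent centers `0` and `1`, with `0`
adjacent to the leaves `2, 3` and `1` adjacent to the leaves `4, 5`. -/
def doubleStar22 : SimpleGraph (Fin 6) :=
  SimpleGraph.fromRel (fun i j =>
    (i = 0 ∧ j = 1) ∨ (i = 0 ∧ j = 2) ∨ (i = 0 ∧ j = 3) ∨ (i = 1 ∧ j = 4) ∨ (i = 1 ∧ j = 5))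

/-!
The extremal graph is `K_{2,n-2}`: every edge has an endpoint of degree two, so no two adjacent
vertices both have degree at least three, as the two centres of `D_{2,2}` must.

Conversely, let `G` be connected and `D_{2,2}`-free on `n ≥ 6` vertices. If `x ~ y` and both have
degree at least three, then `|N(x) ∪ N(y)| ≤ 5`, otherwise two disjoint pairs of leaves complete
the edge to a `D_{2,2}`. Hence a vertex of degree at least five only has neighbours of degree at
most two, and a vertex `x` of degree four contains the neighbourhood of each neighbour of degree at
least three in `N[x]`. With connectivity and `n ≥ 6` this makes the set `T` of vertices of degree
at least four independent, and gives every vertex of degree three at most one neighbour in `T`.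
Letting each vertex of `T` collect one unit from each neighbour yields `∑ (4 - deg v) ≥ 4 |T|`.
The cases `|T| ≤ 1` are handled directly (a cubic `G` would have every edge in a triangle,
forcing `G = K_4`). So `∑ (4 - deg v) ≥ 7`, i.e. `2 e(G) ≤ 4n - 7`.
-/

open Finset

theorem Finset.exists_disjoint_subsets_card_eq_two {α : Type*} [DecidableEq α] {A B : Finset α}
    (hA : 2 ≤ #A) (hB : 2 ≤ #B) (hAB : 4 ≤ #(A ∪ B)) :
    ∃ A' ⊆ A, ∃ B' ⊆ B, #A' = 2 ∧ #B' = 2 ∧ Disjoint A' B' := by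
  -- take `B'` with as many points outside `A` as possible
  obtain ⟨S, hSB, hS⟩ := exists_subset_card_eq (min_le_right 2 #(B \ A))
  obtain ⟨B', hSB', hB'B, hB'⟩ :=
    exists_subsuperset_card_eq (hSB.trans sdiff_subset) (hS ▸ min_le_left _ _) hB
  have hS' : #(A ∩ B') + #S ≤ 2 := by
    rw [← hB', ← card_union_of_disjoint]
    · exact card_le_card (union_subset inter_subset_right hSB')
    · exact disjoint_of_subset_right hSB (disjoint_of_subset_left inter_subset_left disjoint_sdiff)
  have := card_sdiff_add_card B A
  have := card_sdiff_add_card_inter A B'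
  obtain ⟨A', hA'A, hA'⟩ :=
    exists_subset_card_eq (show 2 ≤ #(A \ B') by rw [union_comm] at hAB; omega)
  exact ⟨A', hA'A.trans sdiff_subset, B', hB'B, hA', hB',
    disjoint_of_subset_left hA'A sdiff_disjoint⟩

namespace SimpleGraph

section

variable {V : Type*} {G : SimpleGraph V}

theorem containsCopy_iff_isContained {α : Type*} {F : SimpleGraph α} :
    ContainsCopy F G ↔ F ⊑ G :=
  isContained_iff_exists_le_comap.symm

theorem Connected.mem_of_forall_adj_mem (hG : G.Connected) {S : Set V} {u : V} (hu : u ∈ S)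
    (hS : ∀ a ∈ S, ∀ b, G.Adj a b → b ∈ S) (v : V) : v ∈ S := by
  by_contra hv
  obtain ⟨d, -, hd, hd'⟩ := (hG u v).some.exists_boundary_dart S hu hv
  exact hd' (hS _ hd _ d.adj)

end

section

variable {V : Type*} [Fintype V] {G : SimpleGraph V} {t u x y : V}

theorem Connected.card_le_of_forall_adj_mem (hG : G.Connected) {S : Finset V} (hu : u ∈ S)
    (hS : ∀ a ∈ S, ∀ b, G.Adj a b → b ∈ S) : Fintype.card V ≤ #S := by
  rw [← card_univ]
  exact card_le_card fun v _ => hG.mem_of_forall_adj_mem (S := ↑S) hu hS v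

variable [DecidableRel G.Adj]

theorem mem_of_adj_of_degree_le_card {s : Finset V} (hs : ∀ w ∈ s, G.Adj u w)
    (hdeg : G.degree u ≤ #s) (hu : G.Adj u x) : x ∈ s := by
  have : s = G.neighborFinset u := eq_of_subset_of_card_le (fun w hw => by simpa using hs w hw)
    (by rwa [card_neighborFinset_eq_degree])
  simpa [this] using hu

def highDegreeVertices (G : SimpleGraph V) [DecidableRel G.Adj] : Finset V :=
  {v | 4 ≤ G.degree v}

@[simp]
theorem mem_highDegreeVertices : u ∈ G.highDegreeVertices ↔ 4 ≤ G.degree u := by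
  simp [highDegreeVertices]

theorem notMem_highDegreeVertices : u ∉ G.highDegreeVertices ↔ G.degree u ≤ 3 := by
  rw [mem_highDegreeVertices]
  omega

variable [DecidableEq V]

theorem card_insert_neighborFinset (x : V) :
    #(insert x (G.neighborFinset x)) = G.degree x + 1 := by
  rw [card_insert_of_notMem (G.notMem_neighborFinset_self x), card_neighborFinset_eq_degree]

theorem insert_neighborFinset_subset_union (hxy : G.Adj x y) :
    insert x (G.neighborFinset x) ⊆ G.neighborFinset x ∪ G.neighborFinset y :=
  insert_subset (mem_union_right _ ((G.mem_neighborFinset _ _).2 hxy.symm)) subset_union_left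

theorem sum_degree_eq_sum_card_inter (s : Finset V) :
    ∑ v ∈ s, G.degree v = ∑ u, #(G.neighborFinset u ∩ s) := by
  have h := sum_card_bipartiteAbove_eq_sum_card_bipartiteBelow (s := s) (t := univ) (r := G.Adj)
  simp only [bipartiteAbove, bipartiteBelow] at h
  convert h using 2 with v _ u
  · rw [← card_neighborFinset_eq_degree, neighborFinset_eq_filter]
  · congr 1
    ext w
    simp [adj_comm, and_comm]

/-- Discharging: every vertex of the independent set `T` collects one unit from each of its
neighbours. -/
theorem sum_four_sub_degree_eq {T : Finset V} (hT : ∀ x ∈ T, ∀ y ∈ T, ¬ G.Adj x y) :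
    ∑ u, (4 - G.degree u : ℤ) =
      4 * #T + ∑ u ∈ Tᶜ, (4 - G.degree u - #(G.neighborFinset u ∩ T) : ℤ) := by
  have hTT : ∑ u ∈ T, #(G.neighborFinset u ∩ T) = 0 :=
    sum_eq_zero fun u hu => card_eq_zero.2 <| eq_empty_of_forall_notMem fun v hv =>
      hT u hu v (mem_inter.1 hv).2 ((G.mem_neighborFinset _ _).1 (mem_inter.1 hv).1)
  have h := sum_degree_eq_sum_card_inter (G := G) T
  rw [← sum_add_sum_compl T, hTT, zero_add] at h
  have h' : ∑ v ∈ T, (G.degree v : ℤ) = ∑ u ∈ Tᶜ, (#(G.neighborFinset u ∩ T) : ℤ) :=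
    mod_cast h
  rw [← sum_add_sum_compl T]
  simp only [sum_sub_distrib, sum_const, nsmul_eq_mul, h']
  ring

theorem containsCopy_doubleStar22_of_adj {A B : Finset V} (hxy : G.Adj x y)
    (hA : A ⊆ (G.neighborFinset x).erase y) (hB : B ⊆ (G.neighborFinset y).erase x)
    (hA₂ : #A = 2) (hB₂ : #B = 2) (hAB : Disjoint A B) : ContainsCopy doubleStar22 G := by
  obtain ⟨a₁, a₂, ha, rfl⟩ := card_eq_two.1 hA₂
  obtain ⟨b₁, b₂, hb, rfl⟩ := card_eq_two.1 hB₂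
  simp only [insert_subset_iff, singleton_subset_iff, mem_erase, mem_neighborFinset] at hA hB
  simp only [disjoint_insert_left, disjoint_insert_right, disjoint_singleton, mem_insert,
    mem_singleton] at hAB
  obtain ⟨⟨hya₁, ha₁⟩, hya₂, ha₂⟩ := hA
  obtain ⟨⟨hxb₁, hb₁⟩, hxb₂, hb₂⟩ := hB
  refine ⟨⟨![x, y, a₁, a₂, b₁, b₂], ?_⟩, fun i j h => ?_⟩
  · rw [← List.nodup_ofFn]
    simp only [List.ofFn_succ, List.ofFn_zero, Matrix.cons_val_zero, Matrix.cons_val_succ,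
      List.nodup_cons, List.mem_cons, List.not_mem_nil, List.nodup_nil, not_or]
    grind [Adj.ne]
  fin_cases i <;> fin_cases j <;> simp [doubleStar22] at h ⊢ <;>
    first | assumption | exact Adj.symm ‹_›

theorem card_neighborFinset_union_le_five (hfree : ¬ ContainsCopy doubleStar22 G)
    (hxy : G.Adj x y) (hx : 3 ≤ G.degree x) (hy : 3 ≤ G.degree y) :
    #(G.neighborFinset x ∪ G.neighborFinset y) ≤ 5 := by
  by_contra! h
  set A := (G.neighborFinset x).erase y
  set B := (G.neighborFinset y).erase x
  have hA : #A + 1 = G.degree x := by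
    rw [card_erase_add_one ((G.mem_neighborFinset _ _).2 hxy), card_neighborFinset_eq_degree]
  have hB : #B + 1 = G.degree y := by
    rw [card_erase_add_one ((G.mem_neighborFinset _ _).2 hxy.symm), card_neighborFinset_eq_degree]
  have hsub : G.neighborFinset x ∪ G.neighborFinset y ⊆ insert x (insert y (A ∪ B)) := by
    intro v
    simp only [mem_union, mem_insert, mem_erase, A, B]
    tauto
  have := card_le_card hsub
  have := card_insert_le x (insert y (A ∪ B))
  have := card_insert_le y (A ∪ B)
  obtain ⟨A', hA', B', hB', hA'₂, hB'₂, hAB⟩ :=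
    exists_disjoint_subsets_card_eq_two (A := A) (B := B) (by omega) (by omega) (by omega)
  exact hfree (containsCopy_doubleStar22_of_adj hxy hA' hB' hA'₂ hB'₂ hAB)

theorem degree_le_two_of_adj_of_five_le_degree (hfree : ¬ ContainsCopy doubleStar22 G)
    (hxy : G.Adj x y) (hx : 5 ≤ G.degree x) : G.degree y ≤ 2 := by
  by_contra! hy
  have := card_le_card (insert_neighborFinset_subset_union hxy)
  have := card_neighborFinset_union_le_five hfree hxy (by omega) hy
  rw [card_insert_neighborFinset] at *
  omega

theorem neighborFinset_subset_of_degree_eq_four (hfree : ¬ ContainsCopy doubleStar22 G)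
    (hxy : G.Adj x y) (hx : G.degree x = 4) (hy : 3 ≤ G.degree y) :
    G.neighborFinset y ⊆ insert x (G.neighborFinset x) := by
  have heq := eq_of_subset_of_card_le (insert_neighborFinset_subset_union hxy) <| by
    rw [card_insert_neighborFinset, hx]
    exact card_neighborFinset_union_le_five hfree hxy (by omega) hy
  exact heq ▸ subset_union_right

theorem not_adj_of_degree_eq_four (hG : G.Connected) (hn : 6 ≤ Fintype.card V)
    (hfree : ¬ ContainsCopy doubleStar22 G) (hx : G.degree x = 4) (hy : G.degree y = 4) :
    ¬ G.Adj x y := by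
  intro hxy
  have hNx := neighborFinset_subset_of_degree_eq_four hfree hxy.symm hy (by omega)
  suffices Fintype.card V ≤ #(insert x (G.neighborFinset x)) by
    rw [card_insert_neighborFinset, hx] at this
    omega
  refine hG.card_le_of_forall_adj_mem (mem_insert_self x _) fun a ha b hab => ?_
  rcases mem_insert.1 ha with rfl | ha
  · exact mem_insert_of_mem ((G.mem_neighborFinset _ _).2 hab)
  have hxa := (G.mem_neighborFinset _ _).1 ha
  by_cases hda : 3 ≤ G.degree a
  · exact neighborFinset_subset_of_degree_eq_four hfree hxa hx hda
      ((G.mem_neighborFinset _ _).2 hab)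
  -- `a` is adjacent to both `x` and `y`, so having degree at most two it has no other neighbour
  have hya : G.Adj y a := by
    have hay : a ≠ y := by rintro rfl; omega
    simpa [hay] using hNx ha
  have := mem_of_adj_of_degree_le_card (s := {x, y}) (by simp [hxa.symm, hya.symm])
    (by rw [card_pair hxy.ne]; omega) hab
  rcases mem_insert.1 this with rfl | hb
  · exact mem_insert_self _ _
  · exact mem_singleton.1 hb ▸ mem_insert_of_mem ((G.mem_neighborFinset _ _).2 hxy)

theorem not_adj_of_four_le_degree (hG : G.Connected) (hn : 6 ≤ Fintype.card V)
    (hfree : ¬ ContainsCopy doubleStar22 G) (hx : 4 ≤ G.degree x) (hy : 4 ≤ G.degree y) :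
    ¬ G.Adj x y := by
  intro hxy
  by_cases hx5 : 5 ≤ G.degree x
  · have := degree_le_two_of_adj_of_five_le_degree hfree hxy hx5; omega
  by_cases hy5 : 5 ≤ G.degree y
  · have := degree_le_two_of_adj_of_five_le_degree hfree hxy.symm hy5; omega
  exact not_adj_of_degree_eq_four hG hn hfree (by omega) (by omega) hxy

theorem card_neighborFinset_inter_highDegreeVertices_le_one (hG : G.Connected)
    (hn : 6 ≤ Fintype.card V) (hfree : ¬ ContainsCopy doubleStar22 G) (hu : G.degree u = 3) :
    #(G.neighborFinset u ∩ G.highDegreeVertices) ≤ 1 := by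
  by_contra! h
  obtain ⟨x, hx, x', hx', hne⟩ := one_lt_card.1 h
  simp only [mem_inter, mem_neighborFinset, mem_highDegreeVertices] at hx hx'
  have hx4 : G.degree x = 4 := by
    by_contra h4
    have := degree_le_two_of_adj_of_five_le_degree hfree hx.1.symm (by omega)
    omega
  have := neighborFinset_subset_of_degree_eq_four hfree hx.1.symm hx4 (by omega)
    ((G.mem_neighborFinset _ _).2 hx'.1)
  rcases mem_insert.1 this with h | h
  · exact hne h.symm
  · exact not_adj_of_four_le_degree hG hn hfree hx.2 hx'.2 ((G.mem_neighborFinset _ _).1 h)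

theorem card_neighborFinset_inter_highDegreeVertices_add_degree_le_four (hG : G.Connected)
    (hn : 6 ≤ Fintype.card V) (hfree : ¬ ContainsCopy doubleStar22 G) (hu : G.degree u ≤ 3) :
    #(G.neighborFinset u ∩ G.highDegreeVertices) + G.degree u ≤ 4 := by
  rcases hu.eq_or_lt with hu | hu
  · have := card_neighborFinset_inter_highDegreeVertices_le_one hG hn hfree hu
    omega
  · have := card_le_card (inter_subset_left (s₁ := G.neighborFinset u)
      (s₂ := G.highDegreeVertices))
    rw [card_neighborFinset_eq_degree] at this
    omega

theorem exists_common_neighbor_of_degree_eq_three (hfree : ¬ ContainsCopy doubleStar22 G)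
    (hxy : G.Adj x y) (hx : G.degree x = 3) (hy : G.degree y = 3) :
    ∃ c, G.Adj x c ∧ G.Adj y c := by
  have := card_union_add_card_inter (G.neighborFinset x) (G.neighborFinset y)
  have := card_neighborFinset_union_le_five hfree hxy hx.ge hy.ge
  rw [card_neighborFinset_eq_degree, card_neighborFinset_eq_degree, hx, hy] at *
  obtain ⟨c, hc⟩ := card_pos.1 (show 0 < #(G.neighborFinset x ∩ G.neighborFinset y) by omega)
  simp only [mem_inter, mem_neighborFinset] at hc
  exact ⟨c, hc⟩

/-- Every edge lies in a triangle (`exists_common_neighbor_of_degree_eq_three`); chasing the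
triangles on `xy`, on `yt` and on the third edge at `x` leaves no room for `t ∉ N[x]`. -/
theorem eq_or_adj_of_adj_of_adj (hfree : ¬ ContainsCopy doubleStar22 G)
    (h3 : ∀ v, G.degree v = 3) (hxy : G.Adj x y) (hyt : G.Adj y t) : t = x ∨ G.Adj x t := by
  by_contra! htx
  obtain ⟨htx, hxt⟩ := htx
  have common {u v : V} (h : G.Adj u v) : ∃ c, G.Adj u c ∧ G.Adj v c :=
    exists_common_neighbor_of_degree_eq_three hfree h (h3 u) (h3 v)
  have three {v p q r w : V} (hp : G.Adj v p) (hq : G.Adj v q) (hr : G.Adj v r) (hpq : p ≠ q)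
      (hpr : p ≠ r) (hqr : q ≠ r) (hw : G.Adj v w) : w = p ∨ w = q ∨ w = r := by
    simpa using mem_of_adj_of_degree_le_card (s := {p, q, r}) (by simp [hp, hq, hr])
      (by rw [card_eq_three.2 ⟨p, q, r, hpq, hpr, hqr, rfl⟩, h3]) hw
  obtain ⟨c, hxc, hyc⟩ := common hxy
  have hct : t ≠ c := by rintro rfl; exact hxt hxc
  have htc : G.Adj t c := by
    obtain ⟨c', hyc', htc'⟩ := common hyt
    rcases three hxy.symm hyt hyc (Ne.symm htx) hxc.ne hct hyc' with rfl | rfl | rfl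
    · exact absurd htc'.symm hxt
    · exact absurd htc' G.irrefl
    · exact htc'
  obtain ⟨b, hxb, hby, hbc⟩ : ∃ b, G.Adj x b ∧ b ≠ y ∧ b ≠ c := by
    by_contra! h
    have hsub : G.neighborFinset x ⊆ {y, c} := fun b hb => by
      have := h b ((G.mem_neighborFinset _ _).1 hb)
      simp only [mem_insert, mem_singleton]
      tauto
    have := (card_le_card hsub).trans card_le_two
    rw [card_neighborFinset_eq_degree, h3] at this
    omega
  obtain ⟨c', hxc', hbc'⟩ := common hxb
  rcases three hxy hxc hxb hyc.ne hby.symm hbc.symm hxc' with rfl | rfl | rfl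
  · rcases three hxy.symm hyt hyc (Ne.symm htx) hxc.ne hct hbc'.symm with rfl | rfl | rfl
    · exact G.irrefl hxb
    · exact hxt hxb
    · exact hbc rfl
  · rcases three hxc.symm hyc.symm htc.symm hxy.ne htx.symm hyt.ne hbc'.symm with rfl | rfl | rfl
    · exact G.irrefl hxb
    · exact hby rfl
    · exact hxt hxb
  · exact G.irrefl hbc'

theorem card_le_four_of_forall_degree_eq_three (hG : G.Connected)
    (hfree : ¬ ContainsCopy doubleStar22 G) (h3 : ∀ v, G.degree v = 3) :
    Fintype.card V ≤ 4 := by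
  obtain ⟨x⟩ := hG.nonempty
  have := hG.card_le_of_forall_adj_mem (mem_insert_self x (G.neighborFinset x)) fun a ha b hab => ?_
  · rwa [card_insert_neighborFinset, h3] at this
  rcases mem_insert.1 ha with rfl | ha
  · exact mem_insert_of_mem ((G.mem_neighborFinset _ _).2 hab)
  rcases eq_or_adj_of_adj_of_adj hfree h3 ((G.mem_neighborFinset _ _).1 ha) hab with rfl | h
  · exact mem_insert_self _ _
  · exact mem_insert_of_mem ((G.mem_neighborFinset _ _).2 h)

theorem seven_le_sum_four_sub_degree_of_degree_le_three (hG : G.Connected)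
    (hn : 6 ≤ Fintype.card V) (hfree : ¬ ContainsCopy doubleStar22 G)
    (h : ∀ v, G.degree v ≤ 3) : 7 ≤ ∑ v, (4 - G.degree v : ℤ) := by
  obtain ⟨u, hu⟩ : ∃ u, G.degree u ≤ 2 := by
    by_contra! h'
    have := card_le_four_of_forall_degree_eq_three hG hfree fun v => le_antisymm (h v) (h' v)
    omega
  have := single_le_sum (f := fun v => (3 - G.degree v : ℤ)) (fun v _ => by simp [h v])
    (mem_univ u)
  simp only [sum_sub_distrib, sum_const, card_univ, nsmul_eq_mul] at this ⊢
  omega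

theorem four_mul_card_highDegreeVertices_le_sum_four_sub_degree (hG : G.Connected)
    (hn : 6 ≤ Fintype.card V) (hfree : ¬ ContainsCopy doubleStar22 G) :
    4 * #G.highDegreeVertices ≤ ∑ v, (4 - G.degree v : ℤ) := by
  rw [sum_four_sub_degree_eq fun x hx y hy => not_adj_of_four_le_degree hG hn hfree
    (mem_highDegreeVertices.1 hx) (mem_highDegreeVertices.1 hy)]
  refine le_add_of_nonneg_right (sum_nonneg fun u hu => ?_)
  have := card_neighborFinset_inter_highDegreeVertices_add_degree_le_four hG hn hfree
    (notMem_highDegreeVertices.1 (mem_compl.1 hu))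
  omega

theorem card_neighborFinset_inter_singleton (u x : V) :
    #(G.neighborFinset u ∩ {x}) = if G.Adj u x then 1 else 0 := by
  split_ifs with h <;> simp [h]

theorem four_add_sum_le_sum_four_sub_degree (hle : ∀ u ≠ x, G.degree u ≤ 3) {S : Finset V}
    (hS : x ∉ S) :
    4 + ∑ u ∈ S, (4 - G.degree u - #(G.neighborFinset u ∩ {x}) : ℤ) ≤
      ∑ v, (4 - G.degree v : ℤ) := by
  rw [sum_four_sub_degree_eq (T := {x}) (by simp), card_singleton, Nat.cast_one, mul_one]
  refine add_le_add le_rfl (sum_le_sum_of_subset_of_nonneg ?_ fun u hu _ => ?_)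
  · intro u hu
    simpa using ne_of_mem_of_not_mem hu hS
  have := hle u (by simpa using hu)
  rw [card_neighborFinset_inter_singleton]
  split_ifs <;> omega

theorem seven_le_sum_four_sub_degree_of_five_le_degree (hfree : ¬ ContainsCopy doubleStar22 G)
    (hx : 5 ≤ G.degree x) (hle : ∀ u ≠ x, G.degree u ≤ 3) :
    7 ≤ ∑ v, (4 - G.degree v : ℤ) := by
  refine le_trans ?_ (four_add_sum_le_sum_four_sub_degree hle (G.notMem_neighborFinset_self x))
  have := card_nsmul_le_sum (G.neighborFinset x)
      (fun u => (4 - G.degree u - #(G.neighborFinset u ∩ {x}) : ℤ)) 1 fun u hu => by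
    have hxu := (G.mem_neighborFinset _ _).1 hu
    have := degree_le_two_of_adj_of_five_le_degree hfree hxu hx
    rw [card_neighborFinset_inter_singleton]
    split_ifs <;> omega
  rw [card_neighborFinset_eq_degree, nsmul_eq_mul, mul_one] at this
  omega

theorem seven_le_sum_four_sub_degree_of_degree_eq_four (hn : 6 ≤ Fintype.card V)
    (hfree : ¬ ContainsCopy doubleStar22 G) (hx : G.degree x = 4)
    (hle : ∀ u ≠ x, G.degree u ≤ 3) : 7 ≤ ∑ v, (4 - G.degree v : ℤ) := by
  obtain ⟨r, -, hr⟩ := exists_mem_notMem_of_card_lt_card (t := univ)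
    (s := insert x (G.neighborFinset x)) (by rw [card_insert_neighborFinset, card_univ]; omega)
  simp only [mem_insert, mem_neighborFinset, not_or] at hr
  have hxr : x ∉ G.neighborFinset r := by simpa [adj_comm] using hr.2
  refine le_trans ?_ (four_add_sum_le_sum_four_sub_degree hle (S := insert r (G.neighborFinset r))
    (by simpa [Ne.symm hr.1] using hxr))
  rw [sum_insert (G.notMem_neighborFinset_self r), card_neighborFinset_inter_singleton,
    if_neg (by simpa [adj_comm] using hr.2)]
  -- a neighbour `u` of `r` adjacent to `x` has degree at most two, since `N(u) ⊄ N[x]`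
  have := card_nsmul_le_sum (G.neighborFinset r)
      (fun u => (4 - G.degree u - #(G.neighborFinset u ∩ {x}) : ℤ)) 1 fun u hu => by
    have hru := (G.mem_neighborFinset _ _).1 hu
    have := hle u (by rintro rfl; exact hxr hu)
    rw [card_neighborFinset_inter_singleton]
    split_ifs with hux
    · have : ¬ 3 ≤ G.degree u := fun h3 => by
        simpa [hr.1, hr.2] using neighborFinset_subset_of_degree_eq_four hfree hux.symm hx h3
          ((G.mem_neighborFinset _ _).2 hru.symm)
      omega
    · omega
  rw [card_neighborFinset_eq_degree, nsmul_eq_mul, mul_one] at this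
  omega

theorem seven_le_sum_four_sub_degree (hG : G.Connected) (hn : 6 ≤ Fintype.card V)
    (hfree : ¬ ContainsCopy doubleStar22 G) : 7 ≤ ∑ v, (4 - G.degree v : ℤ) := by
  rcases Nat.lt_or_ge 1 #G.highDegreeVertices with hT | hT
  · have := four_mul_card_highDegreeVertices_le_sum_four_sub_degree hG hn hfree
    omega
  rcases Nat.le_one_iff_eq_zero_or_eq_one.1 hT with hT | hT
  · refine seven_le_sum_four_sub_degree_of_degree_le_three hG hn hfree fun v => ?_
    exact notMem_highDegreeVertices.1 (card_eq_zero.1 hT ▸ notMem_empty v)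
  obtain ⟨x, hx⟩ := card_eq_one.1 hT
  have hle (u : V) (hu : u ≠ x) : G.degree u ≤ 3 := notMem_highDegreeVertices.1 (by simpa [hx])
  rcases (mem_highDegreeVertices.1 (by simp [hx] : x ∈ G.highDegreeVertices)).lt_or_eq with h | h
  · exact seven_le_sum_four_sub_degree_of_five_le_degree hfree h hle
  · exact seven_le_sum_four_sub_degree_of_degree_eq_four hn hfree h.symm hle

theorem Connected.card_edgeFinset_le_of_not_containsCopy_doubleStar22 (hG : G.Connected)
    (hn : 6 ≤ Fintype.card V) (hfree : ¬ ContainsCopy doubleStar22 G) :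
    #G.edgeFinset ≤ 2 * Fintype.card V - 4 := by
  have h := seven_le_sum_four_sub_degree hG hn hfree
  simp only [sum_sub_distrib, sum_const, card_univ, nsmul_eq_mul] at h
  have := G.sum_degrees_eq_twice_card_edges
  have : ∑ v, (G.degree v : ℤ) = 2 * #G.edgeFinset := by exact_mod_cast this
  omega

end

theorem completeBipartiteGraph_connected {α β : Type*} [Nonempty α] [Nonempty β] :
    (completeBipartiteGraph α β).Connected := by
  obtain ⟨a⟩ := ‹Nonempty α›
  obtain ⟨b⟩ := ‹Nonempty β›
  have h : ∀ v, (completeBipartiteGraph α β).Reachable v (.inl a) := by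
    rintro (a' | b')
    · exact (Adj.reachable (v := .inr b) (by simp)).trans (Adj.reachable (by simp))
    · exact Adj.reachable (by simp)
  exact (connected_iff _).2 ⟨fun u v => (h u).trans (h v).symm, ⟨.inl a⟩⟩

theorem not_containsCopy_doubleStar22_completeBipartiteGraph (β : Type*) :
    ¬ ContainsCopy doubleStar22 (completeBipartiteGraph (Fin 2) β) := by
  rintro ⟨f, hf⟩
  have three_left (c i j k : Fin 6) (hc : (f c).isRight) (hi : doubleStar22.Adj c i)
      (hj : doubleStar22.Adj c j) (hk : doubleStar22.Adj c k) (hij : i ≠ j) (hik : i ≠ k)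
      (hjk : j ≠ k) : False := by
    obtain ⟨z, hz⟩ := Sum.isRight_iff.1 hc
    have left {l : Fin 6} (hl : doubleStar22.Adj c l) : ∃ a, f l = .inl a :=
      Sum.isLeft_iff.1 (by simpa [hz] using hf hl)
    obtain ⟨a, ha⟩ := left hi
    obtain ⟨b, hb⟩ := left hj
    obtain ⟨d, hd⟩ := left hk
    have : a = b ∨ a = d ∨ b = d := by omega
    rcases this with rfl | rfl | rfl
    · exact hij (f.injective (ha.trans hb.symm))
    · exact hik (f.injective (ha.trans hd.symm))
    · exact hjk (f.injective (hb.trans hd.symm))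
  have h01 := hf (show doubleStar22.Adj 0 1 by simp [doubleStar22])
  rw [completeBipartiteGraph_adj] at h01
  rcases h01 with ⟨-, h1⟩ | ⟨h0, -⟩
  · exact three_left 1 0 4 5 h1 (by simp [doubleStar22]) (by simp [doubleStar22])
      (by simp [doubleStar22]) (by decide) (by decide) (by decide)
  · exact three_left 0 1 2 3 h0 (by simp [doubleStar22]) (by simp [doubleStar22])
      (by simp [doubleStar22]) (by decide) (by decide) (by decide)

theorem ncard_edgeSet_completeBipartiteGraph (m : ℕ) :
    (completeBipartiteGraph (Fin 2) (Fin m)).edgeSet.ncard = 2 * m := by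
  simp [Set.ncard_def, encard_edgeSet_completeBipartiteGraph]

theorem exists_connected_not_containsCopy_doubleStar22 {n : ℕ} (hn : 3 ≤ n) :
    ∃ G : SimpleGraph (Fin n), G.Connected ∧ ¬ ContainsCopy doubleStar22 G ∧
      2 * n - 4 = G.edgeSet.ncard := by
  obtain ⟨m, rfl⟩ : ∃ m, n = 2 + m := ⟨n - 2, by omega⟩
  have : Nonempty (Fin m) := ⟨⟨0, by omega⟩⟩
  let e := (finSumFinEquiv : Fin 2 ⊕ Fin m ≃ Fin (2 + m))
  refine ⟨(completeBipartiteGraph (Fin 2) (Fin m)).map e,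
    (Iso.map e _).connected_iff.1 completeBipartiteGraph_connected, ?_, ?_⟩
  · rw [containsCopy_iff_isContained, ← isContained_congr_right (Iso.map e _),
      ← containsCopy_iff_isContained]
    exact not_containsCopy_doubleStar22_completeBipartiteGraph _
  · rw [← Equiv.coe_toEmbedding, edgeSet_map,
      Set.ncard_image_of_injective _ e.toEmbedding.sym2Map.injective,
      ncard_edgeSet_completeBipartiteGraph]
    omega

end SimpleGraph

/-- Theorem: `ex_c(n, D_{2,2}) = 2n - 4` for every `n ≥ 6`. -/
theorem exConn_doubleStar22 (n : ℕ) (hn : 6 ≤ n) :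
    exConn n doubleStar22 = 2 * n - 4 := by
  refine IsGreatest.csSup_eq ⟨exists_connected_not_containsCopy_doubleStar22 (by omega), ?_⟩
  rintro _ ⟨G, hG, hfree, rfl⟩
  classical
  rw [← coe_edgeFinset, Set.ncard_coe_finset]
  simpa using hG.card_edgeFinset_le_of_not_containsCopy_doubleStar22 (by simpa using hn) hfree
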